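/- Let M ≥ 2, D = (M+2)(M-1)/2, and let φ_1, ..., φ_N be unit vectors in ℝ^M. Then there exist unit vectors y_1, ..., y_N in ℝ^D such that for all j, l ∈ {1, ..., N}, ⟨φ_j, φ_l⟩^2 = 1/M + ((M-1)/M)·⟨y_j, y_l⟩. -/

import Mathlib

/-!
For `M × M` matrices under the Hilbert–Schmidt inner product,
`⟪a aᵀ, b bᵀ⟫ = ⟪a, b⟫²`, `⟪a aᵀ, I⟫ = ‖a‖²` and `⟪I, I⟫ = M`, so for unit vectors the traceless
parts `a aᵀ - I / M` satisfy `⟪a aᵀ - I / M, b bᵀ - I / M⟫ = ⟪a, b⟫² - 1 / M`; in particular they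
have squared norm `(M - 1) / M`. They lie in the space of traceless symmetric matrices, whose
dimension is `M (M + 1) / 2 - 1 = (M + 2)(M - 1) / 2`, and rescaling by `√(M / (M - 1))` and
mapping isometrically into `ℝ^D` gives the `y_j`.
-/

open Module

theorem exists_linearIsometry_euclideanSpace {𝕜 E : Type*} [RCLike 𝕜] [NormedAddCommGroup E]
    [InnerProductSpace 𝕜 E] [FiniteDimensional 𝕜 E] {D : ℕ} (h : finrank 𝕜 E ≤ D) :
    Nonempty (E →ₗᵢ[𝕜] EuclideanSpace 𝕜 (Fin D)) := by
  let b := stdOrthonormalBasis 𝕜 E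
  let e : Fin (finrank 𝕜 E) → EuclideanSpace 𝕜 (Fin D) :=
    fun i => EuclideanSpace.single (Fin.castLE h i) 1
  have he : Orthonormal 𝕜 e := EuclideanSpace.orthonormal_single.comp _ (Fin.castLE_injective h)
  refine ⟨(b.toBasis.constr 𝕜 e).isometryOfOrthonormal (v := b.toBasis) (by simp) ?_⟩
  convert he
  ext1 i
  simp

theorem choose_succ_two_sub_one (M : ℕ) : (M + 1).choose 2 - 1 = (M + 2) * (M - 1) / 2 := by
  rcases M with _ | m
  · rfl
  rw [Nat.choose_two_right, show (m + 1 + 1) * (m + 1 + 1 - 1) = (m + 3) * m + 2 * 1 by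
    simp only [Nat.add_sub_cancel]; ring, Nat.add_mul_div_left _ _ two_pos]
  simp

variable {ι : Type*} [Fintype ι]

theorem card_subtype_fst_le_snd [LinearOrder ι] :
    Fintype.card {p : ι × ι // p.1 ≤ p.2} = (Fintype.card ι + 1).choose 2 := by
  rw [← Fintype.card_congr Sym2.sortEquiv, Sym2.card]

variable (ι) in
def symmetricTraceless : Submodule ℝ (EuclideanSpace ℝ (ι × ι)) where
  carrier := {X | (∀ i j, X (i, j) = X (j, i)) ∧ ∑ i, X (i, i) = 0}
  add_mem' := by
    rintro X Y ⟨hX, hX'⟩ ⟨hY, hY'⟩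
    refine ⟨fun i j => by simp [hX i j, hY i j], ?_⟩
    simp [Finset.sum_add_distrib, hX', hY']
  zero_mem' := by simp
  smul_mem' := by
    rintro c X ⟨hX, hX'⟩
    refine ⟨fun i j => by simp [hX i j], ?_⟩
    simp [← Finset.mul_sum, hX']

theorem eq_zero_of_mem_symmetricTraceless [LinearOrder ι] {X : EuclideanSpace ℝ (ι × ι)}
    (hX : X ∈ symmetricTraceless ι) (i₀ : ι)
    (h : ∀ i j, i ≤ j → (i, j) ≠ (i₀, i₀) → X (i, j) = 0) : X = 0 := by
  obtain ⟨hsymm, htrace⟩ := hX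
  have hoff : ∀ i j, (i, j) ≠ (i₀, i₀) → X (i, j) = 0 := by
    intro i j hij
    rcases le_total i j with hle | hle
    · exact h i j hle hij
    · rw [hsymm]
      exact h j i hle (by grind)
  have hdiag : X (i₀, i₀) = 0 := by
    rwa [Finset.sum_eq_single i₀ (fun i _ hi => hoff i i (by simpa using hi)) (by simp)] at htrace
  ext ⟨i, j⟩
  by_cases hij : (i, j) = (i₀, i₀)
  · rw [hij, hdiag]; rfl
  · exact hoff i j hij

theorem finrank_symmetricTraceless_le [LinearOrder ι] [Nonempty ι] :
    finrank ℝ (symmetricTraceless ι) ≤ (Fintype.card ι + 1).choose 2 - 1 := by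
  obtain ⟨i₀⟩ := ‹Nonempty ι›
  let s := (Finset.univ.filter fun p : ι × ι => p.1 ≤ p.2).erase (i₀, i₀)
  let T : EuclideanSpace ℝ (ι × ι) →ₗ[ℝ] (s → ℝ) :=
    LinearMap.pi fun p => (EuclideanSpace.proj (𝕜 := ℝ) (p : ι × ι)).toLinearMap
  have hT : Function.Injective (T ∘ₗ (symmetricTraceless ι).subtype) := by
    rw [← LinearMap.ker_eq_bot, LinearMap.ker_eq_bot']
    intro X hX
    refine Subtype.ext (eq_zero_of_mem_symmetricTraceless X.2 i₀ fun i j hle hne => ?_)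
    exact congrFun hX ⟨(i, j), by simp [s, hne, hle]⟩
  have hcard : s.card = (Fintype.card ι + 1).choose 2 - 1 := by
    rw [Finset.card_erase_of_mem (by simp), ← Fintype.card_subtype, card_subtype_fst_le_snd]
  simpa [hcard] using LinearMap.finrank_le_finrank_of_injective hT

section

variable [DecidableEq ι]

/-- Vectors in `EuclideanSpace ℝ (ι × ι)` stand for `ι × ι` matrices with the Hilbert–Schmidt
inner product. -/
def outerProduct (a : EuclideanSpace ℝ ι) : EuclideanSpace ℝ (ι × ι) :=
  WithLp.toLp 2 fun p => a p.1 * a p.2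

variable (ι) in
def identityVec : EuclideanSpace ℝ (ι × ι) :=
  WithLp.toLp 2 fun p => if p.1 = p.2 then 1 else 0

theorem inner_identityVec (X : EuclideanSpace ℝ (ι × ι)) :
    inner ℝ X (identityVec ι) = ∑ i, X (i, i) := by
  simp [identityVec, PiLp.inner_apply, Fintype.sum_prod_type]

omit [DecidableEq ι] in
theorem inner_outerProduct (a b : EuclideanSpace ℝ ι) :
    inner ℝ (outerProduct a) (outerProduct b) = inner ℝ a b ^ 2 := by
  simp only [outerProduct, PiLp.inner_apply, Fintype.sum_prod_type, sq, Finset.sum_mul_sum]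
  simp only [RCLike.inner_apply, conj_trivial]
  refine Finset.sum_congr rfl fun i _ => Finset.sum_congr rfl fun j _ => by ring

theorem inner_outerProduct_identityVec (a : EuclideanSpace ℝ ι) :
    inner ℝ (outerProduct a) (identityVec ι) = ‖a‖ ^ 2 := by
  rw [inner_identityVec, EuclideanSpace.norm_sq_eq]
  simp [outerProduct, sq]

theorem inner_identityVec_self : inner ℝ (identityVec ι) (identityVec ι) = Fintype.card ι := by
  rw [inner_identityVec]
  simp [identityVec]

noncomputable def tracelessPart (a : EuclideanSpace ℝ ι) : EuclideanSpace ℝ (ι × ι) :=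
  outerProduct a - (Fintype.card ι : ℝ)⁻¹ • identityVec ι

theorem tracelessPart_mem {a : EuclideanSpace ℝ ι} (ha : ‖a‖ = 1) :
    tracelessPart a ∈ symmetricTraceless ι := by
  have : Nonempty ι := by
    by_contra h
    rw [not_nonempty_iff] at h
    simp [Subsingleton.elim a 0] at ha
  refine ⟨fun i j => ?_, ?_⟩
  · simp [tracelessPart, outerProduct, identityVec, mul_comm, eq_comm]
  · rw [← inner_identityVec, tracelessPart, inner_sub_left, real_inner_smul_left,
      inner_outerProduct_identityVec, inner_identityVec_self, ha]
    field_simp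
    simp

theorem inner_tracelessPart {a b : EuclideanSpace ℝ ι} (ha : ‖a‖ = 1) (hb : ‖b‖ = 1) :
    inner ℝ (tracelessPart a) (tracelessPart b) = inner ℝ a b ^ 2 - (Fintype.card ι : ℝ)⁻¹ := by
  simp only [tracelessPart, inner_sub_left, inner_sub_right, real_inner_smul_left,
    real_inner_smul_right, inner_outerProduct, inner_outerProduct_identityVec,
    inner_identityVec_self, real_inner_comm (outerProduct b) (identityVec ι), ha, hb]
  have : (Fintype.card ι : ℝ)⁻¹ * ((Fintype.card ι : ℝ)⁻¹ * Fintype.card ι) =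
      (Fintype.card ι : ℝ)⁻¹ := by
    rcases eq_or_ne (Fintype.card ι : ℝ) 0 with h | h <;> simp [h]
  rw [this]
  ring

end

theorem spherical_embedding_real {M N : ℕ} (hM : 2 ≤ M)
    (φ : Fin N → EuclideanSpace ℝ (Fin M))
    (hunit : ∀ j, ‖φ j‖ = 1) :
    ∃ y : Fin N → EuclideanSpace ℝ (Fin ((M + 2) * (M - 1) / 2)),
      (∀ j, ‖y j‖ = 1) ∧
      ∀ j l, (inner ℝ (φ j) (φ l) : ℝ) ^ 2
        = 1 / (M : ℝ) + ((M : ℝ) - 1) / M * (inner ℝ (y j) (y l) : ℝ) := by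
  have : Nonempty (Fin M) := ⟨⟨0, by omega⟩⟩
  obtain ⟨f⟩ := exists_linearIsometry_euclideanSpace (𝕜 := ℝ) (D := (M + 2) * (M - 1) / 2)
    (by simpa [choose_succ_two_sub_one] using finrank_symmetricTraceless_le (ι := Fin M))
  have hM_gt_one : (1 : ℝ) < M := by exact_mod_cast hM
  have hM_sub_one : (M - 1 : ℝ) ≠ 0 := by linarith
  let c := √(M / (M - 1 : ℝ))
  have hc : c ^ 2 = M / (M - 1 : ℝ) := Real.sq_sqrt (div_nonneg (by positivity) (by linarith))
  let y j := c • f ⟨tracelessPart (φ j), tracelessPart_mem (hunit j)⟩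
  have hy : ∀ j l,
      inner ℝ (y j) (y l) = M / (M - 1) * (inner ℝ (φ j) (φ l) ^ 2 - (M : ℝ)⁻¹) := by
    intro j l
    rw [real_inner_smul_left, real_inner_smul_right, f.inner_map_map, Submodule.coe_inner,
      inner_tracelessPart (hunit j) (hunit l), Fintype.card_fin, ← mul_assoc, ← sq, hc]
  refine ⟨y, fun j => ?_, fun j l => ?_⟩
  · have : ‖y j‖ ^ 2 = 1 := by
      rw [← real_inner_self_eq_norm_sq, hy, real_inner_self_eq_norm_sq, hunit]
      field_simp
    exact (pow_eq_one_iff_of_nonneg (norm_nonneg _) two_ne_zero).mp this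
  · rw [hy]
    field_simp
    ring
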